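/- Let Γ¹, Γ² be finite nonempty sets and let u, w : Γ¹ × Γ² → ℝ. Suppose that for every (i,j) in the argmax set Γ̃ = argmax (u − w), at least one of the following holds: (a) there exists k ∈ Γ¹, k ≠ i, with u(i,j) − u(k,j) = c₁(i,k) = w(i,j) − w(k,j) for some function c₁, and then (k,j) ∈ Γ̃; or (b) there exists l ∈ Γ², l ≠ j, with u(i,j) − u(i,l) = c₂(j,l) = w(i,j) − w(i,l) and then (i,l) ∈ Γ̃. Then there exists a finite sequence of pairs (i₁,j₁), …, (i_N,j_N) in Γ̃ with (i_N,j_N) = (i₁,j₁), N ≥ 2, such that consecutive pairs differ in exactly one coordinate. -/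

import Mathlib

/-! Every point of the nonempty argmax set has a neighbour in it differing in exactly one coordinate.
Following such neighbours forever inside a finite set must revisit a point, and the walk between the
two visits is the loop. -/

open Function

theorem Function.exists_iterate_mem_periodicPts {α : Type*} [Finite α] (f : α → α) (x : α) :
    ∃ a, f^[a] x ∈ periodicPts f := by
  obtain ⟨a, b, hab, heq⟩ := Finite.exists_ne_map_eq_of_infinite fun n => f^[n] x
  wlog hlt : a < b generalizing a b
  · exact this b a hab.symm heq.symm (hab.lt_or_gt.resolve_left hlt)
  refine ⟨a, b - a, Nat.sub_pos_of_lt hlt, ?_⟩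
  rw [IsPeriodicPt, IsFixedPt, ← iterate_add_apply, Nat.sub_add_cancel hlt.le]
  exact heq.symm

theorem Set.exists_closed_walk_of_forall_exists_rel {α : Type*} [Finite α] {S : Set α}
    {R : α → α → Prop} (hS : S.Nonempty) (h : ∀ x ∈ S, ∃ y ∈ S, R x y) :
    ∃ (N : ℕ) (s : ℕ → α), 1 ≤ N ∧ s N = s 0 ∧ (∀ q ≤ N, s q ∈ S) ∧
      ∀ q < N, R (s q) (s (q + 1)) := by
  choose f hfS hfR using h
  let g : S → S := fun x => ⟨f x x.2, hfS x x.2⟩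
  obtain ⟨a, N, hN, hper⟩ := exists_iterate_mem_periodicPts g ⟨hS.some, hS.some_mem⟩
  refine ⟨N, fun q => g^[q] (g^[a] _), hN, congrArg Subtype.val hper, fun q _ => Subtype.prop _,
    fun q _ => ?_⟩
  simp only [iterate_succ_apply']
  exact hfR _ _

theorem stmt_12 {Γ₁ Γ₂ : Type*} [Fintype Γ₁] [Nonempty Γ₁] [Fintype Γ₂] [Nonempty Γ₂]
    (u w : Γ₁ × Γ₂ → ℝ) (c₁ : Γ₁ → Γ₁ → ℝ) (c₂ : Γ₂ → Γ₂ → ℝ)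
    (Γt : Set (Γ₁ × Γ₂))
    (hΓt : Γt = {p | u p - w p = ⨆ q : Γ₁ × Γ₂, (u q - w q)})
    (hstep : ∀ p ∈ Γt,
      (∃ k : Γ₁, k ≠ p.1 ∧ u p - u (k, p.2) = c₁ p.1 k ∧
        w p - w (k, p.2) = c₁ p.1 k ∧ (k, p.2) ∈ Γt) ∨
      (∃ l : Γ₂, l ≠ p.2 ∧ u p - u (p.1, l) = c₂ p.2 l ∧
        w p - w (p.1, l) = c₂ p.2 l ∧ (p.1, l) ∈ Γt)) :
    ∃ (N : ℕ) (s : ℕ → Γ₁ × Γ₂), 1 ≤ N ∧ s N = s 0 ∧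
      (∀ q ≤ N, s q ∈ Γt) ∧
      (∀ q < N,
        ((s q).1 = (s (q + 1)).1 ∧ (s q).2 ≠ (s (q + 1)).2) ∨
        ((s q).1 ≠ (s (q + 1)).1 ∧ (s q).2 = (s (q + 1)).2)) := by
  have hne : Γt.Nonempty := by
    obtain ⟨p, hp⟩ := exists_eq_ciSup_of_finite (f := fun q : Γ₁ × Γ₂ => u q - w q)
    exact ⟨p, hΓt ▸ hp⟩
  refine Set.exists_closed_walk_of_forall_exists_rel
    (R := fun p q => (p.1 = q.1 ∧ p.2 ≠ q.2) ∨ (p.1 ≠ q.1 ∧ p.2 = q.2)) hne fun p hp => ?_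
  rcases hstep p hp with ⟨k, hk, -, -, hkΓ⟩ | ⟨l, hl, -, -, hlΓ⟩
  · exact ⟨(k, p.2), hkΓ, Or.inr ⟨hk.symm, rfl⟩⟩
  · exact ⟨(p.1, l), hlΓ, Or.inl ⟨rfl, hl.symm⟩⟩
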